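/- The contextual preorder coincides with the simulation preorder: (Γ1;Δ1) ≼_c (Γ2;Δ2) if and only if (Γ1;Δ1) ≼_s (Γ2;Δ2). -/

import Mathlib

/-- Formulas of the linear-logic fragment: atoms, 1, ⊗, ⊤, &, atomic-antecedent ⊸, !. -/
inductive Formula : Type where
  | atom : ℕ → Formula
  | one : Formula
  | tensor : Formula → Formula → Formula
  | top : Formula
  | with_ : Formula → Formula → Formula
  | limp : ℕ → Formula → Formula
  | bang : Formula → Formula
deriving DecidableEq

/-- Contexts are finite multisets of formulas. -/
abbrev Ctx : Type := Multiset Formula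

/-- A process state (Γ;Δ): unrestricted context Γ and linear context Δ. -/
abbrev State : Type := Ctx × Ctx

/-- Composition of states: ((Γ1;Δ1),(Γ2;Δ2)) = (Γ1,Γ2; Δ1,Δ2). -/
def State.comp (s t : State) : State := (s.1 + t.1, s.2 + t.2)

/-- DILL derivability Γ;Δ ⊢ A. -/
inductive Derives : Ctx → Ctx → Formula → Prop where
  | init (Γ : Ctx) (a : ℕ) : Derives Γ {Formula.atom a} (Formula.atom a)
  | clone {Γ Δ : Ctx} {A C : Formula} :
      Derives (A ::ₘ Γ) (A ::ₘ Δ) C → Derives (A ::ₘ Γ) Δ C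
  | tensorR {Γ Δ₁ Δ₂ : Ctx} {A B : Formula} :
      Derives Γ Δ₁ A → Derives Γ Δ₂ B → Derives Γ (Δ₁ + Δ₂) (Formula.tensor A B)
  | tensorL {Γ Δ : Ctx} {A B C : Formula} :
      Derives Γ (A ::ₘ B ::ₘ Δ) C → Derives Γ (Formula.tensor A B ::ₘ Δ) C
  | oneR (Γ : Ctx) : Derives Γ 0 Formula.one
  | oneL {Γ Δ : Ctx} {C : Formula} :
      Derives Γ Δ C → Derives Γ (Formula.one ::ₘ Δ) C
  | withR {Γ Δ : Ctx} {A B : Formula} :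
      Derives Γ Δ A → Derives Γ Δ B → Derives Γ Δ (Formula.with_ A B)
  | withL₁ {Γ Δ : Ctx} {A₁ A₂ C : Formula} :
      Derives Γ (A₁ ::ₘ Δ) C → Derives Γ (Formula.with_ A₁ A₂ ::ₘ Δ) C
  | withL₂ {Γ Δ : Ctx} {A₁ A₂ C : Formula} :
      Derives Γ (A₂ ::ₘ Δ) C → Derives Γ (Formula.with_ A₁ A₂ ::ₘ Δ) C
  | topR (Γ Δ : Ctx) : Derives Γ Δ Formula.top
  | limpR {Γ Δ : Ctx} {a : ℕ} {B : Formula} :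
      Derives Γ (Formula.atom a ::ₘ Δ) B → Derives Γ Δ (Formula.limp a B)
  | limpL {Γ Δ₁ Δ₂ : Ctx} {a : ℕ} {B C : Formula} :
      Derives Γ Δ₁ (Formula.atom a) → Derives Γ (B ::ₘ Δ₂) C →
      Derives Γ (Formula.limp a B ::ₘ (Δ₁ + Δ₂)) C
  | bangR {Γ : Ctx} {A : Formula} :
      Derives Γ 0 A → Derives Γ 0 (Formula.bang A)
  | bangL {Γ Δ : Ctx} {A C : Formula} :
      Derives (A ::ₘ Γ) Δ C → Derives Γ (Formula.bang A ::ₘ Δ) C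

/-- The logical preorder (Γ1;Δ1) ≼ₗ (Γ2;Δ2). -/
def LogicalPre (s t : State) : Prop :=
  ∀ (Γ' Δ' : Ctx) (C : Formula),
    Derives (Γ' + s.1) (Δ' + s.2) C → Derives (Γ' + t.1) (Δ' + t.2) C

/-- The reduction relation ⇝ on process states. -/
inductive Red : State → State → Prop where
  | tensor (Γ Δ : Ctx) (A B : Formula) :
      Red (Γ, Formula.tensor A B ::ₘ Δ) (Γ, A ::ₘ B ::ₘ Δ)
  | one (Γ Δ : Ctx) :
      Red (Γ, Formula.one ::ₘ Δ) (Γ, Δ)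
  | with₁ (Γ Δ : Ctx) (A₁ A₂ : Formula) :
      Red (Γ, Formula.with_ A₁ A₂ ::ₘ Δ) (Γ, A₁ ::ₘ Δ)
  | with₂ (Γ Δ : Ctx) (A₁ A₂ : Formula) :
      Red (Γ, Formula.with_ A₁ A₂ ::ₘ Δ) (Γ, A₂ ::ₘ Δ)
  | comm (Γ Δ : Ctx) (a : ℕ) (B : Formula) :
      Red (Γ, Formula.atom a ::ₘ Formula.limp a B ::ₘ Δ) (Γ, B ::ₘ Δ)
  | bang (Γ Δ : Ctx) (A : Formula) :
      Red (Γ, Formula.bang A ::ₘ Δ) (A ::ₘ Γ, Δ)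
  | clone (Γ Δ : Ctx) (A : Formula) :
      Red (A ::ₘ Γ, Δ) (A ::ₘ Γ, A ::ₘ Δ)

/-- ⇝*, the reflexive-transitive closure of reduction. -/
def RedStar : State → State → Prop := Relation.ReflTransGen Red

/-- Labels of the LTS: τ, send !a, receive ?a. -/
inductive Label : Type where
  | tau : Label
  | send : ℕ → Label
  | recv : ℕ → Label
deriving DecidableEq

/-- The labeled transition system on states. -/
inductive Step : State → Label → State → Prop where
  | send (Γ Δ : Ctx) (a : ℕ) :
      Step (Γ, Formula.atom a ::ₘ Δ) (Label.send a) (Γ, Δ)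
  | recv (Γ Δ : Ctx) (a : ℕ) (B : Formula) :
      Step (Γ, Formula.limp a B ::ₘ Δ) (Label.recv a) (Γ, B ::ₘ Δ)
  | comm {s₁ s₁' s₂ s₂' : State} {a : ℕ} :
      Step s₁ (Label.send a) s₁' → Step s₂ (Label.recv a) s₂' →
      Step (State.comp s₁ s₂) Label.tau (State.comp s₁' s₂')
  | tensor (Γ Δ : Ctx) (A B : Formula) :
      Step (Γ, Formula.tensor A B ::ₘ Δ) Label.tau (Γ, A ::ₘ B ::ₘ Δ)
  | one (Γ Δ : Ctx) :
      Step (Γ, Formula.one ::ₘ Δ) Label.tau (Γ, Δ)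
  | with₁ (Γ Δ : Ctx) (A₁ A₂ : Formula) :
      Step (Γ, Formula.with_ A₁ A₂ ::ₘ Δ) Label.tau (Γ, A₁ ::ₘ Δ)
  | with₂ (Γ Δ : Ctx) (A₁ A₂ : Formula) :
      Step (Γ, Formula.with_ A₁ A₂ ::ₘ Δ) Label.tau (Γ, A₂ ::ₘ Δ)
  | bang (Γ Δ : Ctx) (A : Formula) :
      Step (Γ, Formula.bang A ::ₘ Δ) Label.tau (A ::ₘ Γ, Δ)
  | clone (Γ Δ : Ctx) (A : Formula) :
      Step (A ::ₘ Γ, Δ) Label.tau (A ::ₘ Γ, A ::ₘ Δ)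

/-- ⇒τ, the reflexive-transitive closure of —τ→. -/
def WeakTau : State → State → Prop :=
  Relation.ReflTransGen (fun s t => Step s Label.tau t)

/-- Weak transition ⇒β: for β = τ it is ⇒τ, otherwise ⇒τ—β→⇒τ. -/
def WeakStep (s : State) (β : Label) (t : State) : Prop :=
  match β with
  | Label.tau => WeakTau s t
  | _ => ∃ u v, WeakTau s u ∧ Step u β v ∧ WeakTau v t

/-- A label is a "non-receive" label α (i.e., τ or a send). -/
def Label.isNonRecv : Label → Prop
  | Label.recv _ => False
  | _ => True

/-- A relation on states is a simulation. -/
def IsSimulation (R : State → State → Prop) : Prop :=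
  ∀ s t, R s t →
    (s.2 = 0 → ∃ Γ₂' : Ctx, WeakTau t (Γ₂', 0) ∧ R (s.1, 0) (Γ₂', 0)) ∧
    (∀ s₁ s₂ : State, s = State.comp s₁ s₂ →
      ∃ t₁ t₂ : State, WeakTau t (State.comp t₁ t₂) ∧ R s₁ t₁ ∧ R s₂ t₂) ∧
    (∀ (α : Label) (s' : State), α.isNonRecv → Step s α s' →
      ∃ t', WeakStep t α t' ∧ R s' t') ∧
    (∀ (a : ℕ) (s' : State), Step s (Label.recv a) s' →
      ∃ t', WeakTau (t.1, Formula.atom a ::ₘ t.2) t' ∧ R s' t')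

/-- The simulation preorder ≼ₛ. -/
def SimPre (s t : State) : Prop :=
  ∃ R : State → State → Prop, IsSimulation R ∧ R s t

/-- Strong barb: (Γ;Δ)↓a. -/
def Barb (s : State) (a : ℕ) : Prop := Formula.atom a ∈ s.2

/-- Weak barb: (Γ;Δ)⇓a. -/
def WeakBarb (s : State) (a : ℕ) : Prop := ∃ t, RedStar s t ∧ Barb t a

def BarbPreserving (R : State → State → Prop) : Prop :=
  ∀ s t a, R s t → Barb s a → WeakBarb t a

def ReductionClosed (R : State → State → Prop) : Prop :=
  ∀ s t s', R s t → Red s s' → ∃ t', RedStar t t' ∧ R s' t'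

def Compositional (R : State → State → Prop) : Prop :=
  ∀ s t u, R s t → R (State.comp s u) (State.comp t u)

def PartitionPreserving (R : State → State → Prop) : Prop :=
  ∀ s t, R s t →
    (s.2 = 0 → ∃ Γ₂' : Ctx, RedStar t (Γ₂', 0) ∧ R (s.1, 0) (Γ₂', 0)) ∧
    (∀ s₁ s₂ : State, s = State.comp s₁ s₂ →
      ∃ t₁ t₂ : State, RedStar t (State.comp t₁ t₂) ∧ R s₁ t₁ ∧ R s₂ t₂)

/-- The contextual preorder ≼_c: the largest barb-preserving, reduction-closed,
compositional, partition-preserving relation on states. -/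
def CtxPre (s t : State) : Prop :=
  ∃ R : State → State → Prop,
    BarbPreserving R ∧ ReductionClosed R ∧ Compositional R ∧ PartitionPreserving R ∧ R s t

/-- ⊗Δ: the ⊗-conjunction of all formulas in Δ (1 if Δ is empty). -/
noncomputable def bigTensor (Δ : Ctx) : Formula :=
  Δ.toList.foldr Formula.tensor Formula.one

/-- !Γ: prefix every formula of Γ with !. -/
def bangCtx (Γ : Ctx) : Ctx := Γ.map Formula.bang

/-!
A τ-step is exactly a reduction, and a receive ?a is tested by composing with the message a,
so the clauses of a simulation are the contextual properties read through the LTS.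

`≼_s ⊆ ≼_c`: closing `≼_s` under parallel contexts `s ∘ u ≼ t ∘ u` gives a barb-preserving,
reduction-closed, compositional, partition-preserving relation; a communication between `s` and
`u` is matched by a send or receive step of `t`.

`≼_c ⊆ ≼_s`: `≼_c` up to an unrestricted residue `(Θ;·)` on the right is a simulation. The only
hard clause is sending `a`. Compose with a tester `a ⊸ c` for a fresh atom `c` and split the
resulting `c` off by partition preservation into a state `p ≽_c (·;c)`. The barb on `c` forces `p`
to hold the tester or `c`, and composing with `c ⊸ 1` forces `p` to reach an empty linear
context. States with disjoint atoms never communicate, so by freshness of `c` the rest of the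
process cannot touch the tester: `t` itself must have emitted `a`, and all that is left of `p` is
unrestricted residue.
-/

namespace Multiset

variable {α : Type*}

@[simp] theorem add_singleton_eq_cons (s : Multiset α) (a : α) : s + {a} = a ::ₘ s := by
  rw [add_comm, singleton_add]

theorem add_eq_cons_iff {X Y Z : Multiset α} {A : α} :
    X + Y = A ::ₘ Z ↔
      (∃ X', X = A ::ₘ X' ∧ Z = X' + Y) ∨ ∃ Y', Y = A ::ₘ Y' ∧ Z = X + Y' := by
  classical
  constructor
  · intro h
    have hA : A ∈ X + Y := h ▸ mem_cons_self A Z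
    rcases mem_add.1 hA with hX | hY
    · refine .inl ⟨X.erase A, (cons_erase hX).symm, (cons_inj_right A).1 ?_⟩
      rw [← h, ← cons_add, cons_erase hX]
    · refine .inr ⟨Y.erase A, (cons_erase hY).symm, (cons_inj_right A).1 ?_⟩
      rw [← h, ← add_cons, cons_erase hY]
  · rintro (⟨X', rfl, rfl⟩ | ⟨Y', rfl, rfl⟩) <;> simp [cons_add, add_cons]

theorem exists_decomposition_of_add_eq_add {P Q X Y : Multiset α} (h : P + Q = X + Y) :
    ∃ A B C D, P = A + B ∧ Q = C + D ∧ X = A + C ∧ Y = B + D := by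
  classical
  refine ⟨P ∩ X, P - X, X - P, Q - (X - P), ?_, ?_, ?_, ?_⟩ <;> ext x <;>
    have := congrArg (count x) h <;> simp only [count_add, count_sub, count_inter] at * <;> omega

end Multiset

def Formula.atoms : Formula → Finset ℕ
  | .atom a => {a}
  | .one => ∅
  | .tensor A B => A.atoms ∪ B.atoms
  | .top => ∅
  | .with_ A B => A.atoms ∪ B.atoms
  | .limp a B => insert a B.atoms
  | .bang A => A.atoms

namespace State

def atoms (s : State) : Finset ℕ := ((s.1 + s.2).map Formula.atoms).sup

def single (A : Formula) : State := (0, {A})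

theorem comp_comm (s t : State) : comp s t = comp t s := by
  simp [comp, add_comm]

theorem comp_assoc (s t u : State) :
    comp (comp s t) u = comp s (comp t u) := by
  simp [comp, add_assoc]

@[simp] theorem comp_zero (s : State) : comp s 0 = s := by
  simp [comp]

theorem comp_right_comm (s t u : State) :
    comp (comp s t) u = comp (comp s u) t := by
  simp only [comp, add_right_comm]

@[simp] theorem atoms_comp (s t : State) : atoms (comp s t) = atoms s ∪ atoms t := by
  simp only [atoms, comp, Multiset.map_add, Multiset.sup_add, Finset.sup_eq_union]
  ac_rfl

theorem atoms_subset_of_mem_snd {s : State} {A : Formula} (h : A ∈ s.2) : A.atoms ⊆ atoms s :=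
  Multiset.le_sup (Multiset.mem_map_of_mem _ (Multiset.mem_add.2 (.inr h)))

@[simp] theorem atoms_single (A : Formula) : atoms (single A) = A.atoms := by
  simp [atoms, single]

@[simp] theorem atoms_mk_cons_snd (Γ Δ : Ctx) (A : Formula) :
    atoms (Γ, A ::ₘ Δ) = A.atoms ∪ atoms (Γ, Δ) := by
  simp [atoms, Multiset.add_cons]

@[simp] theorem atoms_mk_cons_fst (Γ Δ : Ctx) (A : Formula) :
    atoms (A ::ₘ Γ, Δ) = A.atoms ∪ atoms (Γ, Δ) := by
  simp [atoms]

theorem mk_cons_eq_comp_single (Γ Δ : Ctx) (A : Formula) :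
    ((Γ, A ::ₘ Δ) : State) = comp (Γ, Δ) (single A) := by
  simp [comp, single]

theorem comp_single_cases {p q y : State} {X : Formula}
    (h : comp p q = comp y (single X)) :
    (∃ p', p = comp p' (single X) ∧ y = comp p' q) ∨
      ∃ q', q = comp q' (single X) ∧ y = comp p q' := by
  obtain ⟨Γp, Δp⟩ := p
  obtain ⟨Γq, Δq⟩ := q
  obtain ⟨Γy, Δy⟩ := y
  simp only [comp, single, add_zero, Multiset.add_singleton_eq_cons,
    Prod.mk.injEq] at h
  obtain ⟨rfl, hΔ⟩ := h
  rcases Multiset.add_eq_cons_iff.1 hΔ with ⟨P, rfl, hy⟩ | ⟨Q, rfl, hy⟩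
  · exact .inl ⟨(Γp, P), by simp [comp, single],
      Prod.ext (by simp [comp]) (by simp [comp, hy])⟩
  · exact .inr ⟨(Γq, Q), by simp [comp, single],
      Prod.ext (by simp [comp]) (by simp [comp, hy])⟩

theorem comp_single_of_fresh {p q y : State} {X : Formula} {c : ℕ}
    (h : comp p q = comp y (single X)) (hy : c ∉ y.atoms) (hp : c ∈ p.atoms) :
    ∃ p', p = comp p' (single X) ∧ y = comp p' q := by
  refine (comp_single_cases h).resolve_right ?_
  rintro ⟨q', -, rfl⟩
  simp_all

theorem comp_comp_comp_comm (s t u v : State) :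
    comp (comp s t) (comp u v) = comp (comp s u) (comp t v) := by
  simp only [comp, add_add_add_comm]

theorem exists_decomposition_of_comp_eq_comp {s u x₁ x₂ : State}
    (h : comp s u = comp x₁ x₂) :
    ∃ A B C D, s = comp A B ∧ u = comp C D ∧
      x₁ = comp A C ∧ x₂ = comp B D := by
  simp only [comp, Prod.mk.injEq] at h
  obtain ⟨A₁, B₁, C₁, D₁, hs₁, hu₁, hx₁, hy₁⟩ := Multiset.exists_decomposition_of_add_eq_add h.1
  obtain ⟨A₂, B₂, C₂, D₂, hs₂, hu₂, hx₂, hy₂⟩ := Multiset.exists_decomposition_of_add_eq_add h.2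
  exact ⟨(A₁, A₂), (B₁, B₂), (C₁, C₂), (D₁, D₂), Prod.ext hs₁ hs₂, Prod.ext hu₁ hu₂,
    Prod.ext hx₁ hx₂, Prod.ext hy₁ hy₂⟩

theorem mem_atoms_of_barb {s : State} {a : ℕ} (h : Barb s a) : a ∈ atoms s :=
  atoms_subset_of_mem_snd h (by simp [Formula.atoms])

end State

theorem Red.comp_right {s s' : State} (u : State) (h : Red s s') :
    Red (State.comp s u) (State.comp s' u) := by
  obtain ⟨Γ, Δ⟩ := u
  cases h <;> simpa [State.comp, Multiset.cons_add] using by constructor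

theorem RedStar.comp_right {s s' : State} (u : State) (h : RedStar s s') :
    RedStar (State.comp s u) (State.comp s' u) :=
  Relation.ReflTransGen.lift (fun x => State.comp x u) (fun _ _ => Red.comp_right u) _ _ h

theorem RedStar.comp_left {u u' : State} (s : State) (h : RedStar u u') :
    RedStar (State.comp s u) (State.comp s u') := by
  simpa only [State.comp_comm s] using h.comp_right s

theorem Red.atoms_subset {s s' : State} (h : Red s s') : s'.atoms ⊆ s.atoms := by
  cases h <;> intro x <;> simp [Formula.atoms] <;> tauto

theorem RedStar.atoms_subset {s s' : State} (h : RedStar s s') : s'.atoms ⊆ s.atoms := by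
  induction h with
  | refl => exact subset_rfl
  | tail _ hred ih => exact hred.atoms_subset.trans ih

theorem Step.send_inv {s z : State} {a : ℕ} (h : Step s (.send a) z) :
    ∃ Γ Δ, s = (Γ, Formula.atom a ::ₘ Δ) ∧ z = (Γ, Δ) := by
  cases h
  exact ⟨_, _, rfl, rfl⟩

theorem Step.recv_inv {s z : State} {a : ℕ} (h : Step s (.recv a) z) :
    ∃ Γ Δ B, s = (Γ, Formula.limp a B ::ₘ Δ) ∧ z = (Γ, B ::ₘ Δ) := by
  cases h
  exact ⟨_, _, _, rfl, rfl⟩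

theorem step_tau_iff_red {s z : State} : Step s .tau z ↔ Red s z := by
  constructor
  · intro h
    cases h with
    | @comm _ _ _ _ a h₁ h₂ =>
      obtain ⟨Γ₁, Δ₁, rfl, rfl⟩ := h₁.send_inv
      obtain ⟨Γ₂, Δ₂, B, rfl, rfl⟩ := h₂.recv_inv
      convert Red.comm (Γ₁ + Γ₂) (Δ₁ + Δ₂) a B using 2 <;>
        simp [State.comp, Multiset.cons_add, Multiset.add_cons, Multiset.cons_swap]
    | _ => constructor
  · intro h
    cases h with
    | comm Γ Δ a B =>
      convert Step.comm (Step.send Γ Δ a) (Step.recv 0 0 a B) using 2 <;>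
        simp only [State.comp, Multiset.add_cons, add_zero, Multiset.cons_swap]
    | _ => constructor

theorem weakTau_iff_redStar {s z : State} : WeakTau s z ↔ RedStar s z := by
  simp only [WeakTau, RedStar, step_tau_iff_red]

theorem weakStep_send_iff {t t' : State} {a : ℕ} :
    WeakStep t (.send a) t' ↔
      ∃ x, RedStar t (State.comp x (.single (.atom a))) ∧ RedStar x t' := by
  constructor
  · rintro ⟨_, _, hu, hstep, hv⟩
    obtain ⟨Γ, Δ, rfl, rfl⟩ := hstep.send_inv
    rw [State.mk_cons_eq_comp_single] at hu
    exact ⟨(Γ, Δ), weakTau_iff_redStar.1 hu, weakTau_iff_redStar.1 hv⟩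
  · rintro ⟨x, ht, hx⟩
    rw [← State.mk_cons_eq_comp_single] at ht
    exact ⟨_, _, weakTau_iff_redStar.2 ht, Step.send _ _ a, weakTau_iff_redStar.2 hx⟩

theorem weakStep_send_of_redStar {t x t' : State} {a : ℕ}
    (ht : RedStar t (State.comp x (.single (.atom a)))) (hx : RedStar x t') :
    WeakStep t (.send a) t' :=
  weakStep_send_iff.2 ⟨x, ht, hx⟩

theorem WeakStep.comp_right_send {t t' : State} {a : ℕ} (u : State)
    (h : WeakStep t (.send a) t') : WeakStep (State.comp t u) (.send a) (State.comp t' u) := by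
  obtain ⟨x, ht, hx⟩ := weakStep_send_iff.1 h
  refine weakStep_send_of_redStar (x := State.comp x u) ?_ (hx.comp_right u)
  rw [State.comp_right_comm]
  exact ht.comp_right u

theorem Step.send_comp_single (x : State) (a : ℕ) :
    Step (State.comp x (.single (.atom a))) (.send a) x := by
  rw [← State.mk_cons_eq_comp_single]
  exact Step.send x.1 x.2 a

theorem Step.mem_atoms_of_send {s s' : State} {a : ℕ} (h : Step s (.send a) s') : a ∈ s.atoms := by
  obtain ⟨Γ, Δ, rfl, -⟩ := h.send_inv
  simp [Formula.atoms]

theorem Step.mem_atoms_of_recv {s s' : State} {a : ℕ} (h : Step s (.recv a) s') : a ∈ s.atoms := by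
  obtain ⟨Γ, Δ, B, rfl, -⟩ := h.recv_inv
  simp [Formula.atoms]

theorem Red.comp_cases_of_linear_principal {A : Formula} {Γ₀ Δ₀ : Ctx}
    (hA : ∀ Γ Δ, Red (Γ, A ::ₘ Δ) (Γ₀ + Γ, Δ₀ + Δ)) {s u z : State} {Γ Δ : Ctx}
    (h : State.comp s u = (Γ, A ::ₘ Δ)) (hz : z = (Γ₀ + Γ, Δ₀ + Δ)) :
    (∃ s', Red s s' ∧ z = State.comp s' u) ∨ (∃ u', Red u u' ∧ z = State.comp s u') := by
  obtain ⟨Γs, Δs⟩ := s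
  obtain ⟨Γu, Δu⟩ := u
  simp only [State.comp, Prod.mk.injEq] at h
  obtain ⟨rfl, hΔ⟩ := h
  subst hz
  rcases Multiset.add_eq_cons_iff.1 hΔ with ⟨X, rfl, rfl⟩ | ⟨Y, rfl, rfl⟩
  · exact .inl ⟨_, hA Γs X, by simp [State.comp, add_assoc]⟩
  · refine .inr ⟨_, hA Γu Y, ?_⟩
    simp only [State.comp, Prod.mk.injEq]
    constructor <;> ac_rfl

theorem Red.comp_cases {s u z : State} (h : Red (State.comp s u) z) :
    (∃ s', Red s s' ∧ z = State.comp s' u) ∨ (∃ u', Red u u' ∧ z = State.comp s u') ∨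
      (∃ a s' u', Step s (.send a) s' ∧ Step u (.recv a) u' ∧ z = State.comp s' u') ∨
      (∃ a s' u', Step s (.recv a) s' ∧ Step u (.send a) u' ∧ z = State.comp s' u') := by
  generalize hw : State.comp s u = w at h
  cases h with
  | tensor Γ Δ A B =>
    exact (comp_cases_of_linear_principal (Γ₀ := 0) (Δ₀ := A ::ₘ B ::ₘ 0)
      (fun Γ Δ => by simpa using Red.tensor Γ Δ A B) hw (by simp)).imp_right .inl
  | one Γ Δ =>
    exact (comp_cases_of_linear_principal (Γ₀ := 0) (Δ₀ := 0)
      (fun Γ Δ => by simpa using Red.one Γ Δ) hw (by simp)).imp_right .inl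
  | with₁ Γ Δ A₁ A₂ =>
    exact (comp_cases_of_linear_principal (Γ₀ := 0) (Δ₀ := A₁ ::ₘ 0)
      (fun Γ Δ => by simpa using Red.with₁ Γ Δ A₁ A₂) hw (by simp)).imp_right .inl
  | with₂ Γ Δ A₁ A₂ =>
    exact (comp_cases_of_linear_principal (Γ₀ := 0) (Δ₀ := A₂ ::ₘ 0)
      (fun Γ Δ => by simpa using Red.with₂ Γ Δ A₁ A₂) hw (by simp)).imp_right .inl
  | bang Γ Δ A =>
    exact (comp_cases_of_linear_principal (Γ₀ := A ::ₘ 0) (Δ₀ := 0)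
      (fun Γ Δ => by simpa using Red.bang Γ Δ A) hw (by simp)).imp_right .inl
  | clone Γ Δ A =>
    obtain ⟨Γs, Δs⟩ := s
    obtain ⟨Γu, Δu⟩ := u
    simp only [State.comp, Prod.mk.injEq] at hw
    obtain ⟨hΓ, rfl⟩ := hw
    rcases Multiset.add_eq_cons_iff.1 hΓ with ⟨X, rfl, rfl⟩ | ⟨Y, rfl, rfl⟩
    · exact .inl ⟨_, Red.clone X Δs A, by simp [State.comp, Multiset.cons_add]⟩
    · exact .inr (.inl ⟨_, Red.clone Y Δu A, by simp [State.comp, Multiset.add_cons]⟩)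
  | comm Γ Δ a B =>
    obtain ⟨Γs, Δs⟩ := s
    obtain ⟨Γu, Δu⟩ := u
    simp only [State.comp, Prod.mk.injEq] at hw
    obtain ⟨rfl, hΔ⟩ := hw
    rcases Multiset.add_eq_cons_iff.1 hΔ with ⟨X, rfl, hX⟩ | ⟨Y, rfl, hY⟩
    · rcases Multiset.add_eq_cons_iff.1 hX.symm with ⟨X', rfl, rfl⟩ | ⟨Y, rfl, rfl⟩
      · exact .inl ⟨_, Red.comm Γs X' a B, by simp [State.comp, Multiset.cons_add]⟩
      · exact .inr (.inr (.inl ⟨a, _, _, Step.send Γs X a, Step.recv Γu Y a B,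
          by simp [State.comp, Multiset.add_cons]⟩))
    · rcases Multiset.add_eq_cons_iff.1 hY.symm with ⟨X, rfl, rfl⟩ | ⟨Y', rfl, rfl⟩
      · exact .inr (.inr (.inr ⟨a, _, _, Step.recv Γs X a B, Step.send Γu Y a,
          by simp [State.comp, Multiset.cons_add]⟩))
      · exact .inr (.inl ⟨_, Red.comm Γu Y' a B, by simp [State.comp, Multiset.add_cons]⟩)

theorem not_red_single_atom (a : ℕ) (z : State) : ¬ Red (.single (.atom a)) z := by
  intro h
  generalize hw : State.single (.atom a) = w at h
  cases h <;> simp [State.single, Multiset.singleton_eq_cons_iff] at hw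

theorem not_red_single_limp (a : ℕ) (B : Formula) (z : State) : ¬ Red (.single (.limp a B)) z := by
  intro h
  generalize hw : State.single (.limp a B) = w at h
  cases h <;> simp [State.single, Multiset.singleton_eq_cons_iff] at hw

theorem RedStar.eq_of_forall_not_red {x w : State} (hx : ∀ z, ¬ Red x z) (h : RedStar x w) :
    w = x := by
  rcases Relation.ReflTransGen.cases_head h with rfl | ⟨z, hz, -⟩
  · rfl
  · exact absurd hz (hx z)

theorem RedStar.exists_comp_of_disjoint {x w z : State} (hd : Disjoint x.atoms w.atoms)
    (h : RedStar (State.comp x w) z) :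
    ∃ x' w', RedStar x x' ∧ RedStar w w' ∧ z = State.comp x' w' := by
  induction h with
  | refl => exact ⟨x, w, .refl, .refl, rfl⟩
  | tail _ hred ih =>
    obtain ⟨x', w', hx, hw, rfl⟩ := ih
    have hd' := hd.mono hx.atoms_subset hw.atoms_subset
    rcases hred.comp_cases with ⟨x'', hr, rfl⟩ | ⟨w'', hr, rfl⟩ | ⟨a, _, _, hs, hr, -⟩ |
      ⟨a, _, _, hr, hs, -⟩
    · exact ⟨x'', w', hx.tail hr, hw, rfl⟩
    · exact ⟨x', w'', hx, hw.tail hr, rfl⟩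
    · exact (Finset.disjoint_left.1 hd' hs.mem_atoms_of_send hr.mem_atoms_of_recv).elim
    · exact (Finset.disjoint_left.1 hd' hr.mem_atoms_of_recv hs.mem_atoms_of_send).elim

theorem RedStar.exists_empty_of_comp_disjoint {x w : State} {Θ : Ctx}
    (hd : Disjoint x.atoms w.atoms) (h : RedStar (State.comp x w) (Θ, 0)) :
    ∃ Θ', RedStar x (Θ', 0) := by
  obtain ⟨x', w', hx, -, hz⟩ := h.exists_comp_of_disjoint hd
  have hx' : x'.2 = 0 := (add_eq_zero.1 (congrArg Prod.snd hz).symm).1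
  exact ⟨x'.1, hx' ▸ hx⟩

theorem RedStar.comp_single_limp_cases {y z : State} {a : ℕ} {B : Formula}
    (h : RedStar (State.comp y (.single (.limp a B))) z) :
    (∃ y', RedStar y y' ∧ z = State.comp y' (.single (.limp a B))) ∨
      ∃ x, RedStar y (State.comp x (.single (.atom a))) ∧
        RedStar (State.comp x (.single B)) z := by
  induction h with
  | refl => exact .inl ⟨y, .refl, rfl⟩
  | tail _ hred ih =>
    rcases ih with ⟨y', hy, rfl⟩ | ⟨x, hy, hz⟩
    · rcases hred.comp_cases with ⟨y'', hr, rfl⟩ | ⟨_, hr, -⟩ | ⟨b, _, _, hs, hr, rfl⟩ |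
        ⟨b, _, _, -, hs, -⟩
      · exact .inl ⟨y'', hy.tail hr, rfl⟩
      · exact absurd hr (not_red_single_limp a B _)
      · obtain ⟨Γ, Δ, rfl, rfl⟩ := hs.send_inv
        obtain ⟨Γ', Δ', B', hT, rfl⟩ := hr.recv_inv
        simp only [State.single, Prod.mk.injEq, Multiset.singleton_eq_cons_iff,
          Formula.limp.injEq] at hT
        obtain ⟨rfl, ⟨rfl, rfl⟩, rfl⟩ := hT
        refine .inr ⟨(Γ, Δ), by rw [← State.mk_cons_eq_comp_single]; exact hy, ?_⟩
        simp only [State.single, Multiset.cons_zero]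
        exact .refl
      · obtain ⟨Γ, Δ, hT, -⟩ := hs.send_inv
        simp [State.single, Multiset.singleton_eq_cons_iff] at hT
    · exact .inr ⟨x, hy, hz.tail hred⟩

theorem ctxPre_barbPreserving : BarbPreserving CtxPre :=
  fun s t a ⟨_, hB, _, _, _, h⟩ => hB s t a h

theorem ctxPre_reductionClosed : ReductionClosed CtxPre := by
  rintro s t s' ⟨R, hB, hR, hC, hP, h⟩ hs
  obtain ⟨t', ht, h'⟩ := hR s t s' h hs
  exact ⟨t', ht, R, hB, hR, hC, hP, h'⟩

theorem ctxPre_compositional : Compositional CtxPre :=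
  fun s t u ⟨R, hB, hR, hC, hP, h⟩ => ⟨R, hB, hR, hC, hP, hC s t u h⟩

theorem ctxPre_partitionPreserving : PartitionPreserving CtxPre := by
  rintro s t ⟨R, hB, hR, hC, hP, h⟩
  obtain ⟨hempty, hsplit⟩ := hP s t h
  refine ⟨fun hs => ?_, fun s₁ s₂ hs => ?_⟩
  · obtain ⟨Γ', ht, h'⟩ := hempty hs
    exact ⟨Γ', ht, R, hB, hR, hC, hP, h'⟩
  · obtain ⟨t₁, t₂, ht, h₁, h₂⟩ := hsplit s₁ s₂ hs
    exact ⟨t₁, t₂, ht, ⟨R, hB, hR, hC, hP, h₁⟩, R, hB, hR, hC, hP, h₂⟩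

theorem CtxPre.exists_redStar {s t s' : State} (h : CtxPre s t) (hs : RedStar s s') :
    ∃ t', RedStar t t' ∧ CtxPre s' t' := by
  induction hs with
  | refl => exact ⟨t, .refl, h⟩
  | tail _ hred ih =>
    obtain ⟨t', ht, h'⟩ := ih
    obtain ⟨t'', ht', h''⟩ := ctxPre_reductionClosed _ _ _ h' hred
    exact ⟨t'', ht.trans ht', h''⟩

theorem CtxPre.exists_redStar_empty {s t : State} {Γ : Ctx} (h : CtxPre s t)
    (hs : RedStar s (Γ, 0)) : ∃ Θ, RedStar t (Θ, 0) := by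
  obtain ⟨t', ht, h'⟩ := h.exists_redStar hs
  obtain ⟨Θ, ht', -⟩ := (ctxPre_partitionPreserving _ _ h').1 rfl
  exact ⟨Θ, ht.trans ht'⟩

theorem CtxPre.mem_atoms_of_barb {s t : State} {a : ℕ} (h : CtxPre s t) (hs : Barb s a) :
    a ∈ t.atoms := by
  obtain ⟨t', ht, ht'⟩ := ctxPre_barbPreserving s t a h hs
  exact ht.atoms_subset (State.mem_atoms_of_barb ht')

theorem exists_send_then_empty_of_tester {p : State} {a c : ℕ} {Θ : Ctx} (hc : c ∉ p.atoms)
    (h : RedStar (State.comp (State.comp p (.single (.limp a (.atom c))))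
      (.single (.limp c .one))) (Θ, 0)) :
    ∃ x Θ', RedStar p (State.comp x (.single (.atom a))) ∧ RedStar x (Θ', 0) := by
  rw [State.comp_right_comm] at h
  rcases h.comp_single_limp_cases with ⟨y, -, hy⟩ | ⟨x, hpx, hx⟩
  · have := congrArg Prod.snd hy
    simp [State.comp, State.single] at this
  have hd : Disjoint p.atoms (State.single (.limp c .one)).atoms := by
    simpa [Formula.atoms] using hc
  obtain ⟨p', w, hp, hw, hpw⟩ := hpx.exists_comp_of_disjoint hd
  rw [hw.eq_of_forall_not_red (not_red_single_limp c .one)] at hpw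
  rcases State.comp_single_cases hpw.symm with ⟨x', rfl, rfl⟩ | ⟨q', hq, -⟩
  · have hc' : c ∉ x'.atoms := fun h' => hc (hp.atoms_subset (by simp [h']))
    rw [State.comp_assoc] at hx
    obtain ⟨Θ', hΘ'⟩ := hx.exists_empty_of_comp_disjoint (by simpa [Formula.atoms] using hc')
    exact ⟨x', Θ', hp, hΘ'⟩
  · have := congrArg Prod.snd hq
    simp [State.comp, State.single, Multiset.singleton_eq_cons_iff] at this

theorem CtxPre.exists_weakStep_send {Γ Δ : Ctx} {t : State} {a : ℕ}
    (h : CtxPre (Γ, .atom a ::ₘ Δ) t) :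
    ∃ q Θ, WeakStep t (.send a) (State.comp (Θ, 0) q) ∧ CtxPre (Γ, Δ) q := by
  obtain ⟨c, hc⟩ := Infinite.exists_notMem_finset t.atoms
  have hfire : Red (State.comp (Γ, .atom a ::ₘ Δ) (.single (.limp a (.atom c))))
      (State.comp (.single (.atom c)) (Γ, Δ)) := by
    convert Red.comm Γ Δ a (.atom c) using 2 <;>
      simp [State.comp, State.single, Multiset.singleton_add, Multiset.cons_swap]
  obtain ⟨V, htV, hV⟩ := ctxPre_reductionClosed _ _ _ (ctxPre_compositional _ _ _ h) hfire
  obtain ⟨p, q, hVpq, hp, hq⟩ := (ctxPre_partitionPreserving _ _ hV).2 _ _ rfl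
  have hcp : c ∈ p.atoms := hp.mem_atoms_of_barb (by simp [Barb, State.single])
  have hdischarge : RedStar (State.comp (.single (.atom c)) (.single (.limp c .one))) (0, 0) :=
    .tail (.single (Red.comm 0 0 c .one)) (Red.one 0 0)
  obtain ⟨Θ, hΘ⟩ := (ctxPre_compositional _ _ _ hp).exists_redStar_empty hdischarge
  refine ⟨q, ?_⟩
  rcases RedStar.comp_single_limp_cases (htV.trans hVpq) with ⟨y, hty, hy⟩ | ⟨x, htx, hx⟩
  · obtain ⟨p', rfl, rfl⟩ := State.comp_single_of_fresh hy (fun h' => hc (hty.atoms_subset h')) hcp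
    obtain ⟨m, Θ', hm, hmΘ⟩ := exists_send_then_empty_of_tester
      (fun h' => hc (hty.atoms_subset (by simp [h']))) hΘ
    refine ⟨Θ', weakStep_send_of_redStar (x := State.comp m q) ?_ (hmΘ.comp_right q), hq⟩
    rw [State.comp_right_comm]
    exact hty.trans (hm.comp_right q)
  · have hcx : c ∉ x.atoms := fun h' => hc (htx.atoms_subset (by simp [h']))
    obtain ⟨x', w, hxx', hw, hpq⟩ :=
      hx.exists_comp_of_disjoint (by simpa [Formula.atoms] using hcx)
    rw [hw.eq_of_forall_not_red (not_red_single_atom c)] at hpq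
    obtain ⟨p', rfl, rfl⟩ :=
      State.comp_single_of_fresh hpq (fun h' => hcx (hxx'.atoms_subset h')) hcp
    rw [State.comp_assoc] at hΘ
    obtain ⟨Θ', hΘ'⟩ := hΘ.exists_empty_of_comp_disjoint
      (by simpa [Formula.atoms] using fun h' => hcx (hxx'.atoms_subset (by simp [h'])))
    exact ⟨Θ', weakStep_send_of_redStar htx (hxx'.trans (hΘ'.comp_right q)), hq⟩

/-- The residue `(Θ;·)` is what a discharged tester leaves behind. -/
def CtxPreUpToResidue (s t : State) : Prop :=
  ∃ t₀ Θ, t = State.comp t₀ (Θ, 0) ∧ CtxPre s t₀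

theorem isSimulation_ctxPreUpToJunk : IsSimulation CtxPreUpToResidue := by
  rintro s _ ⟨t, Θ, rfl, h⟩
  refine ⟨fun hs => ?_, fun s₁ s₂ hs => ?_, fun α s' hα hstep => ?_, fun a s' hstep => ?_⟩
  · obtain ⟨Γ', ht, h'⟩ := (ctxPre_partitionPreserving _ _ h).1 hs
    refine ⟨Γ' + Θ, weakTau_iff_redStar.2 ?_, (Γ', 0), Θ, by simp [State.comp], h'⟩
    simpa [State.comp] using ht.comp_right (Θ, 0)
  · obtain ⟨t₁, t₂, ht, h₁, h₂⟩ := (ctxPre_partitionPreserving _ _ h).2 s₁ s₂ hs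
    refine ⟨State.comp t₁ (Θ, 0), t₂, weakTau_iff_redStar.2 ?_, ⟨t₁, Θ, rfl, h₁⟩,
      ⟨t₂, 0, (State.comp_zero t₂).symm, h₂⟩⟩
    rw [← State.comp_right_comm]
    exact ht.comp_right _
  · cases α with
    | tau =>
      obtain ⟨t', ht, h'⟩ := ctxPre_reductionClosed _ _ _ h (step_tau_iff_red.1 hstep)
      exact ⟨_, weakTau_iff_redStar.2 (ht.comp_right _), t', Θ, rfl, h'⟩
    | send a =>
      obtain ⟨Γ, Δ, rfl, rfl⟩ := hstep.send_inv
      obtain ⟨q, Θ', ht, hq⟩ := h.exists_weakStep_send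
      refine ⟨_, ht.comp_right_send (Θ, 0), q, Θ' + Θ, ?_, hq⟩
      simp only [State.comp, add_zero, Prod.mk.injEq]
      exact ⟨by ac_rfl, by simp⟩
    | recv a => exact hα.elim
  · obtain ⟨Γ, Δ, B, rfl, rfl⟩ := hstep.recv_inv
    have hred : Red (State.comp (Γ, .limp a B ::ₘ Δ) (.single (.atom a))) (Γ, B ::ₘ Δ) := by
      simpa [State.comp, State.single, Multiset.cons_swap] using Red.comm Γ Δ a B
    obtain ⟨t', ht, h'⟩ :=
      ctxPre_reductionClosed _ _ _ (ctxPre_compositional _ _ (.single (.atom a)) h) hred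
    refine ⟨State.comp t' (Θ, 0), weakTau_iff_redStar.2 ?_, t', Θ, rfl, h'⟩
    convert ht.comp_right (Θ, 0) using 1
    simp [State.comp, State.single]

theorem simPre_of_ctxPre {s t : State} (h : CtxPre s t) : SimPre s t :=
  ⟨CtxPreUpToResidue, isSimulation_ctxPreUpToJunk, t, 0, (State.comp_zero t).symm, h⟩

theorem isSimulation_simPre : IsSimulation SimPre := by
  rintro s t ⟨R, hR, h⟩
  have hle : ∀ x y, R x y → SimPre x y := fun x y hxy => ⟨R, hR, hxy⟩
  obtain ⟨h₁, h₂, h₃, h₄⟩ := hR s t h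
  exact ⟨fun hs => (h₁ hs).imp fun _ ⟨ht, h'⟩ => ⟨ht, hle _ _ h'⟩,
    fun s₁ s₂ hs => (h₂ s₁ s₂ hs).imp fun _ => .imp fun _ ⟨ht, h₁', h₂'⟩ =>
      ⟨ht, hle _ _ h₁', hle _ _ h₂'⟩,
    fun α s' hα hstep => (h₃ α s' hα hstep).imp fun _ ⟨ht, h'⟩ => ⟨ht, hle _ _ h'⟩,
    fun a s' hstep => (h₄ a s' hstep).imp fun _ ⟨ht, h'⟩ => ⟨ht, hle _ _ h'⟩⟩

def SimPreInContext (x y : State) : Prop :=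
  ∃ s t u, x = State.comp s u ∧ y = State.comp t u ∧ SimPre s t

theorem barbPreserving_simPreInContext : BarbPreserving SimPreInContext := by
  rintro _ _ a ⟨s, t, u, rfl, rfl, h⟩ hbarb
  rcases Multiset.mem_add.1 hbarb with hs | hu
  · have hstep : Step s (.send a) (s.1, s.2.erase (.atom a)) := by
      convert Step.send s.1 _ a
      exact (Multiset.cons_erase hs).symm
    obtain ⟨t', ht', -⟩ := (isSimulation_simPre s t h).2.2.1 (.send a) _ trivial hstep
    obtain ⟨x, ht, -⟩ := weakStep_send_iff.1 ht'
    exact ⟨_, ht.comp_right u, by simp [Barb, State.comp, State.single]⟩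
  · exact ⟨_, .refl, Multiset.mem_add.2 (.inr hu)⟩

theorem reductionClosed_simPreInContext : ReductionClosed SimPreInContext := by
  rintro _ _ z ⟨s, t, u, rfl, rfl, h⟩ hred
  obtain ⟨-, -, hstep, hrecv⟩ := isSimulation_simPre s t h
  rcases hred.comp_cases with ⟨s', hs, rfl⟩ | ⟨u', hu, rfl⟩ | ⟨a, s', u', hs, hu, rfl⟩ |
    ⟨a, s', u', hs, hu, rfl⟩
  · obtain ⟨t', ht, h'⟩ := hstep .tau s' trivial (step_tau_iff_red.2 hs)
    exact ⟨_, (weakTau_iff_redStar.1 ht).comp_right u, s', t', u, rfl, rfl, h'⟩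
  · exact ⟨_, RedStar.comp_left t (.single hu), s, t, u', rfl, rfl, h⟩
  · obtain ⟨t', ht, h'⟩ := hstep (.send a) s' trivial hs
    obtain ⟨x, htx, hxt'⟩ := weakStep_send_iff.1 ht
    have hcomm := step_tau_iff_red.1 (Step.comm (Step.send_comp_single x a) hu)
    exact ⟨_, ((htx.comp_right u).tail hcomm).trans (hxt'.comp_right u'), s', t', u', rfl, rfl, h'⟩
  · obtain ⟨t', ht, h'⟩ := hrecv a s' hs
    obtain ⟨Γ, Δ, rfl, rfl⟩ := hu.send_inv
    refine ⟨_, ?_, s', t', (Γ, Δ), rfl, rfl, h'⟩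
    convert (weakTau_iff_redStar.1 ht).comp_right (Γ, Δ) using 1
    simp [State.comp, Multiset.add_cons, Multiset.cons_add]

theorem compositional_simPreInContext : Compositional SimPreInContext := by
  rintro _ _ v ⟨s, t, u, rfl, rfl, h⟩
  exact ⟨s, t, State.comp u v, State.comp_assoc .., State.comp_assoc .., h⟩

theorem partitionPreserving_simPreInContext : PartitionPreserving SimPreInContext := by
  rintro _ _ ⟨s, t, u, rfl, rfl, h⟩
  obtain ⟨hempty, hsplit, -, -⟩ := isSimulation_simPre s t h
  refine ⟨fun hsu => ?_, fun x₁ x₂ hx => ?_⟩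
  · obtain ⟨hs, hu⟩ := add_eq_zero.1 hsu
    obtain ⟨Γ', ht, h'⟩ := hempty hs
    refine ⟨Γ' + u.1, ?_, (s.1, 0), (Γ', 0), (u.1, 0), by simp [State.comp, hu],
      by simp [State.comp], h'⟩
    simpa [State.comp, hu] using (weakTau_iff_redStar.1 ht).comp_right u
  · obtain ⟨A, B, C, D, rfl, rfl, rfl, rfl⟩ := State.exists_decomposition_of_comp_eq_comp hx
    obtain ⟨t₁, t₂, ht, h₁, h₂⟩ := hsplit A B rfl
    refine ⟨State.comp t₁ C, State.comp t₂ D, ?_, ⟨A, t₁, C, rfl, rfl, h₁⟩,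
      ⟨B, t₂, D, rfl, rfl, h₂⟩⟩
    rw [← State.comp_comp_comp_comm]
    exact (weakTau_iff_redStar.1 ht).comp_right _

theorem ctxPre_of_simPre {s t : State} (h : SimPre s t) : CtxPre s t :=
  ⟨SimPreInContext, barbPreserving_simPreInContext, reductionClosed_simPreInContext,
    compositional_simPreInContext, partitionPreserving_simPreInContext,
    s, t, 0, (State.comp_zero s).symm, (State.comp_zero t).symm, h⟩

/-- the contextual preorder coincides with the simulation preorder. -/
theorem ctxPre_iff_simPre (s t : State) :
    CtxPre s t ↔ SimPre s t :=
  ⟨simPre_of_ctxPre, ctxPre_of_simPre⟩
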